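/- Let V: (0, a/2] → (0, ∞) be differentiable with (n − Cζ)V(ζ) ≤ ζ V'(ζ) for all ζ ∈ (0, a/2], where C > 0, and suppose lim_{ε→0⁺} V(ε)/ε^n = ω_n > 0. Then V(ζ) ≥ ω_n ζ^n e^{-Cζ} for all 0 < ζ ≤ a/2. -/

import Mathlib

/-!
Multiplying the differential inequality by `e^{Cζ} / ζ^{n+1}` shows that
`ζ ↦ V(ζ) e^{Cζ} / ζ^n` has nonnegative derivative, hence is nondecreasing on `(0, a/2]`.
Its limit at `0⁺` is `ω_n`, so it is at least `ω_n` everywhere.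
-/

open Set Real Filter Topology

theorem hasDerivAt_mul_exp_div_pow {V : ℝ → ℝ} {v ζ : ℝ} (n : ℕ) (C : ℝ)
    (hV : HasDerivAt V v ζ) (hζ : ζ ≠ 0) :
    HasDerivAt (fun x => V x * exp (C * x) / x ^ n)
      (exp (C * ζ) / ζ ^ (n + 1) * (ζ * v - (n - C * ζ) * V ζ)) ζ := by
  have hexp : HasDerivAt (fun x => exp (C * x)) (exp (C * ζ) * C) ζ := by
    simpa using ((hasDerivAt_id ζ).const_mul C).exp
  refine ((hV.mul hexp).div (hasDerivAt_pow n ζ) (pow_ne_zero n hζ)).congr_deriv ?_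
  have hpow : (n : ℝ) * ζ ^ (n - 1) * ζ = n * ζ ^ n := by
    cases n with
    | zero => simp
    | succ k => rw [Nat.add_sub_cancel, pow_succ]; ring
  rw [Pi.mul_apply, div_mul_eq_mul_div, div_eq_div_iff (by positivity) (by positivity)]
  linear_combination (-(exp (C * ζ) * V ζ * ζ ^ n)) * hpow

theorem monotoneOn_mul_exp_div_pow {V V' : ℝ → ℝ} {n : ℕ} {C b : ℝ}
    (hderiv : ∀ ζ ∈ Ioc 0 b, HasDerivAt V (V' ζ) ζ)
    (hineq : ∀ ζ ∈ Ioc 0 b, ((n : ℝ) - C * ζ) * V ζ ≤ ζ * V' ζ) :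
    MonotoneOn (fun ζ => V ζ * exp (C * ζ) / ζ ^ n) (Ioc 0 b) := by
  have hg (ζ) (hζ : ζ ∈ Ioc 0 b) :=
    hasDerivAt_mul_exp_div_pow n C (hderiv ζ hζ) hζ.1.ne'
  refine monotoneOn_of_hasDerivWithinAt_nonneg (convex_Ioc 0 b)
    (fun ζ hζ => (hg ζ hζ).continuousAt.continuousWithinAt)
    (fun ζ hζ => (hg ζ (interior_subset hζ)).hasDerivWithinAt) fun ζ hζ => ?_
  rw [interior_Ioc] at hζ
  have hζ_pos : 0 < ζ := hζ.1
  exact mul_nonneg (by positivity) (sub_nonneg.2 (hineq ζ (Ioo_subset_Ioc_self hζ)))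

theorem tendsto_mul_exp_div_pow {V : ℝ → ℝ} {n : ℕ} {ω : ℝ} (C : ℝ)
    (hlim : Tendsto (fun ε => V ε / ε ^ n) (𝓝[>] 0) (𝓝 ω)) :
    Tendsto (fun ε => V ε * exp (C * ε) / ε ^ n) (𝓝[>] 0) (𝓝 ω) := by
  have hexp : Tendsto (fun ε => exp (C * ε)) (𝓝[>] 0) (𝓝 1) := by
    simpa using ((continuous_const.mul continuous_id).rexp.tendsto 0).mono_left
      nhdsWithin_le_nhds
  simpa [mul_div_right_comm] using hlim.mul hexp

theorem volume_lower_bound_general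
    (n : ℕ) (C a ωn : ℝ)
    (V V' : ℝ → ℝ)
    (hderiv : ∀ ζ ∈ Set.Ioc (0 : ℝ) (a / 2), HasDerivAt V (V' ζ) ζ)
    (hineq : ∀ ζ ∈ Set.Ioc (0 : ℝ) (a / 2),
      ((n : ℝ) - C * ζ) * V ζ ≤ ζ * V' ζ)
    (hlim : Tendsto (fun ε => V ε / ε ^ n) (nhdsWithin 0 (Set.Ioi 0))
      (nhds ωn)) :
    ∀ ζ ∈ Set.Ioc (0 : ℝ) (a / 2),
      V ζ ≥ ωn * ζ ^ n * Real.exp (-C * ζ) := by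
  intro ζ hζ
  have hmono := monotoneOn_mul_exp_div_pow hderiv hineq
  have hle : ωn ≤ V ζ * exp (C * ζ) / ζ ^ n := by
    refine le_of_tendsto (tendsto_mul_exp_div_pow C hlim) ?_
    filter_upwards [Ioc_mem_nhdsGT hζ.1] with ε hε
    exact hmono ⟨hε.1, hε.2.trans hζ.2⟩ hζ hε.2
  calc ωn * ζ ^ n * exp (-C * ζ)
      ≤ V ζ * exp (C * ζ) * exp (-C * ζ) := by
        gcongr ?_ * _
        exact (le_div_iff₀ (pow_pos hζ.1 n)).1 hle
    _ = V ζ := by rw [mul_assoc, ← exp_add]; simp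

/-- **Volume lower bound from the differential inequality and the asymptotic
density at the center.**  If a positive differentiable `V` on `(0, a/2]`
satisfies `(n − Cζ)V(ζ) ≤ ζ V'(ζ)` there, `C > 0`, and
`V(ε)/ε^n → ω_n > 0` as `ε → 0⁺`, then `V(ζ) ≥ ω_n ζ^n e^{-Cζ}`
for all `0 < ζ ≤ a/2`. -/
theorem volume_lower_bound
    (n : ℕ) (hn : 0 < n) (C a ωn : ℝ) (hC : 0 < C) (ha : 0 < a) (hω : 0 < ωn)
    (V V' : ℝ → ℝ)
    (hpos : ∀ ζ ∈ Set.Ioc (0 : ℝ) (a / 2), 0 < V ζ)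
    (hderiv : ∀ ζ ∈ Set.Ioc (0 : ℝ) (a / 2), HasDerivAt V (V' ζ) ζ)
    (hineq : ∀ ζ ∈ Set.Ioc (0 : ℝ) (a / 2),
      ((n : ℝ) - C * ζ) * V ζ ≤ ζ * V' ζ)
    (hlim : Tendsto (fun ε => V ε / ε ^ n) (nhdsWithin 0 (Set.Ioi 0))
      (nhds ωn)) :
    ∀ ζ ∈ Set.Ioc (0 : ℝ) (a / 2),
      V ζ ≥ ωn * ζ ^ n * Real.exp (-C * ζ) :=
  volume_lower_bound_general n C a ωn V V' hderiv hineq hlim
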